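/- arXiv:2109.05094 — 2 statements merged into one kernel-verified Lean document; each statement's English description precedes it below -/
import Mathlib

section
/- If a bit multigraph corresponds to a (2n+1)×(2n+1) crossword puzzle and a vertex b > 0 in part B is adjacent to two vertices a₁ < a₂ (both positive) in the same floor set ⌊k⌋_A, then the edge {a₁, b} is labeled '−' and the edge {a₂, b} is labeled '+'. -/
/-- Edge labels of a bit multigraph: `+`, `-`, `0`. -/
inductive Label
  | plus
  | minus
  | zero
  deriving DecidableEq

/-- A (balanced) bipartite indexed tricolored multigraph: vertex indices in each
part are rationals, edges are triples (index in A, index in B, label). -/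
structure BitMG where
  A : Finset ℚ
  B : Finset ℚ
  E : Multiset (ℚ × ℚ × Label)

/-- Degree of a vertex of part A: number of incident edges. -/
def degA (G : BitMG) (x : ℚ) : ℕ := (G.E.filter (fun e => e.1 = x)).card

/-- Degree of a vertex of part B: number of incident edges. -/
def degB (G : BitMG) (y : ℚ) : ℕ := (G.E.filter (fun e => e.2.1 = y)).card

/-- Given that the edge `(a,b,L)` was voided and a vertex incident to it was split
into `v0` (lower) and `v1` (upper), `splitTarget L M v0 v1 other otherRemoved`
tells which of the two split vertices an edge labeled `M`, whose other endpoint is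
`other` (the other endpoint of the removed edge being `otherRemoved`), is
reassigned to, following the voiding rules of the paper. -/
def splitTarget (L M : Label) (v0 v1 : ℚ) (other otherRemoved : ℚ) : ℚ :=
  if M = L then
    match L with
    | Label.minus => if otherRemoved < other then v0 else v1
    | _ => if other < otherRemoved then v0 else v1
  else
    match M with
    | Label.plus => v1
    | Label.minus => v0
    | Label.zero => if L = Label.plus then v0 else v1

/-- The voiding procedure: `Voiding G G'` holds when `G'` is obtained from `G` by
removing one edge `(a,b,L)`, splitting `a` into fresh vertices `a0 < a1` and `b`
into `b0 < b1` (keeping integer parts and relative order of indices), and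
reassigning the remaining incident edges according to the rules of the paper. -/
def Voiding (G G' : BitMG) : Prop :=
  ∃ a b L, (a, b, L) ∈ G.E ∧ a ∈ G.A ∧ b ∈ G.B ∧
    ∃ a0 a1 b0 b1 : ℚ,
      a0 ∉ G.A ∧ a1 ∉ G.A ∧ b0 ∉ G.B ∧ b1 ∉ G.B ∧
      a0 < a1 ∧ b0 < b1 ∧
      ⌊a0⌋ = ⌊a⌋ ∧ ⌊a1⌋ = ⌊a⌋ ∧ ⌊b0⌋ = ⌊b⌋ ∧ ⌊b1⌋ = ⌊b⌋ ∧
      (∀ x ∈ G.A, x ≠ a → (x < a → x < a0) ∧ (a < x → a1 < x)) ∧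
      (∀ y ∈ G.B, y ≠ b → (y < b → y < b0) ∧ (b < y → b1 < y)) ∧
      G'.A = insert a0 (insert a1 (G.A.erase a)) ∧
      G'.B = insert b0 (insert b1 (G.B.erase b)) ∧
      G'.E = (G.E.erase (a, b, L)).map (fun e =>
        ((if e.1 = a then splitTarget L e.2.2 a0 a1 e.2.1 b else e.1),
         (if e.2.1 = b then splitTarget L e.2.2 b0 b1 e.1 a else e.2.1),
         e.2.2))

/-- `VoidedFrom v G G'` : `G'` is obtained from `G` by `v` voiding operations. -/
def VoidedFrom : ℕ → BitMG → BitMG → Prop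
  | 0, G, G' => G' = G
  | v + 1, G, G' => ∃ H, VoidedFrom v G H ∧ Voiding H G'

/-- The crossword multigraph of the unvoided (2n+1)×(2n+1) grid: each part has
vertices indexed 0,1,…,n; nonzero vertices are pairwise joined by one `+` and one
`-` edge, and zero vertices are joined to every vertex of the other part by a `0`
edge (with a single 0–0 edge). -/
def unvoidedCMG (n : ℕ) : BitMG where
  A := (Finset.Icc 0 n).image (fun i : ℕ => (i : ℚ))
  B := (Finset.Icc 0 n).image (fun i : ℕ => (i : ℚ))
  E := ((Finset.Icc 1 n ×ˢ Finset.Icc 1 n).val.map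
          (fun p => ((p.1 : ℚ), (p.2 : ℚ), Label.plus)))
      + ((Finset.Icc 1 n ×ˢ Finset.Icc 1 n).val.map
          (fun p => ((p.1 : ℚ), (p.2 : ℚ), Label.minus)))
      + ((Finset.Icc 0 n).val.map (fun b => ((0 : ℚ), (b : ℚ), Label.zero)))
      + ((Finset.Icc 1 n).val.map (fun a => ((a : ℚ), (0 : ℚ), Label.zero)))

/-!
Voiding preserves four properties of the unvoided crossword multigraph: every edge joins
vertices of the two parts; an edge is labelled `0` exactly when an endpoint lies in floor set
`0`; an edge is determined by its pair of floor sets and its label; and in each pair of floor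
sets the `−` edge lies weakly below the `+` edge in both coordinates. The last one survives a
split because `−` edges go to the lower copy, `+` edges to the upper one, and the copies keep
the order of the split vertex with all other vertices.

Two distinct edges at `b` from the same floor set therefore carry different labels, neither of
them `0` (being `0` depends only on the floor sets), so one is `+` and the other `−`, and the
order forces the lower one to be `−`.
-/

def floorCell (e : ℚ × ℚ × Label) : ℤ × ℤ × Label := (⌊e.1⌋, ⌊e.2.1⌋, e.2.2)

/-- The endpoint map of `Voiding`, for the vertex `v` split into `v0 < v1`. -/
def splitEndpoint (L M : Label) (v v0 v1 other otherRemoved x : ℚ) : ℚ :=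
  if x = v then splitTarget L M v0 v1 other otherRemoved else x

section SplitEndpoint

variable {L M : Label} {v v0 v1 o o' r x y : ℚ}

lemma splitTarget_eq_or (L M : Label) (v0 v1 o r : ℚ) :
    splitTarget L M v0 v1 o r = v0 ∨ splitTarget L M v0 v1 o r = v1 := by
  cases L <;> cases M <;> unfold splitTarget <;> split_ifs <;> simp_all

lemma splitTarget_minus_le_plus (h : v0 ≤ v1) :
    splitTarget L .minus v0 v1 o r ≤ splitTarget L .plus v0 v1 o' r := by
  unfold splitTarget
  cases L <;> grind

lemma floor_splitEndpoint (h0 : ⌊v0⌋ = ⌊v⌋) (h1 : ⌊v1⌋ = ⌊v⌋) :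
    ⌊splitEndpoint L M v v0 v1 o r x⌋ = ⌊x⌋ := by
  unfold splitEndpoint
  split_ifs with hx
  · rcases splitTarget_eq_or L M v0 v1 o r with h | h <;> rw [h, hx] <;> assumption
  · rfl

lemma splitEndpoint_mem {S : Finset ℚ} (hx : x ∈ S) :
    splitEndpoint L M v v0 v1 o r x ∈ insert v0 (insert v1 (S.erase v)) := by
  unfold splitEndpoint
  split_ifs with hxv
  · rcases splitTarget_eq_or L M v0 v1 o r with h | h <;> simp [h]
  · simp [hxv, hx]

lemma splitEndpoint_minus_le_plus {S : Finset ℚ} (hv : v0 < v1)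
    (hsep : ∀ z ∈ S, z ≠ v → (z < v → z < v0) ∧ (v < z → v1 < z))
    (hx : x ∈ S) (hy : y ∈ S) (hyx : y ≤ x) :
    splitEndpoint L .minus v v0 v1 o r y ≤ splitEndpoint L .plus v v0 v1 o' r x := by
  unfold splitEndpoint
  split_ifs with hyv hxv hxv
  · exact splitTarget_minus_le_plus hv.le
  · have : v1 < x := (hsep x hx hxv).2 (lt_of_le_of_ne (hyv ▸ hyx) (Ne.symm hxv))
    rcases splitTarget_eq_or L .minus v0 v1 o r with h | h <;> rw [h] <;> linarith
  · have : y < v0 := (hsep y hy hyv).1 (lt_of_le_of_ne (hxv ▸ hyx) hyv)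
    rcases splitTarget_eq_or L .plus v0 v1 o' r with h | h <;> rw [h] <;> linarith
  · exact hyx

end SplitEndpoint

structure CrosswordInvariant (G : BitMG) : Prop where
  mem_parts : ∀ e ∈ G.E, e.1 ∈ G.A ∧ e.2.1 ∈ G.B
  label_eq_zero_iff : ∀ e ∈ G.E, e.2.2 = Label.zero ↔ ⌊e.1⌋ = 0 ∨ ⌊e.2.1⌋ = 0
  eq_of_floorCell_eq : ∀ e ∈ G.E, ∀ e' ∈ G.E, floorCell e = floorCell e' → e = e'
  minus_le_plus : ∀ e ∈ G.E, ∀ e' ∈ G.E, e.2.2 = Label.plus → e'.2.2 = Label.minus →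
    ⌊e'.1⌋ = ⌊e.1⌋ → ⌊e'.2.1⌋ = ⌊e.2.1⌋ → e'.1 ≤ e.1 ∧ e'.2.1 ≤ e.2.1

theorem CrosswordInvariant.voiding {G G' : BitMG} (hG : CrosswordInvariant G)
    (hV : Voiding G G') : CrosswordInvariant G' := by
  obtain ⟨a, b, L, -, -, -, a0, a1, b0, b1, -, -, -, -, ha01, hb01, hfa0, hfa1, hfb0, hfb1,
    hsepA, hsepB, hA', hB', hE'⟩ := hV
  set f : ℚ × ℚ × Label → ℚ × ℚ × Label := fun e =>
    (splitEndpoint L e.2.2 a a0 a1 e.2.1 b e.1, splitEndpoint L e.2.2 b b0 b1 e.1 a e.2.1, e.2.2)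
  have hE : G'.E = (G.E.erase (a, b, L)).map f := hE'
  have hcell : ∀ e, floorCell (f e) = floorCell e := fun e => by
    simp only [f, floorCell, floor_splitEndpoint hfa0 hfa1, floor_splitEndpoint hfb0 hfb1]
  have hmem : ∀ {e'}, e' ∈ G'.E → ∃ e ∈ G.E, f e = e' := fun he' => by
    obtain ⟨e, he, rfl⟩ := Multiset.mem_map.1 (hE ▸ he')
    exact ⟨e, Multiset.mem_of_mem_erase he, rfl⟩
  constructor
  · rintro _ he'
    obtain ⟨e, he, rfl⟩ := hmem he'
    rw [hA', hB']
    exact ⟨splitEndpoint_mem (hG.mem_parts e he).1, splitEndpoint_mem (hG.mem_parts e he).2⟩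
  · rintro _ he'
    obtain ⟨e, he, rfl⟩ := hmem he'
    simp only [f, floor_splitEndpoint hfa0 hfa1, floor_splitEndpoint hfb0 hfb1]
    exact hG.label_eq_zero_iff e he
  · rintro _ he₁' _ he₂' h
    obtain ⟨e₁, he₁, rfl⟩ := hmem he₁'
    obtain ⟨e₂, he₂, rfl⟩ := hmem he₂'
    rw [hcell, hcell] at h
    rw [hG.eq_of_floorCell_eq e₁ he₁ e₂ he₂ h]
  · rintro _ he₁' _ he₂' hp hm hfl1 hfl2
    obtain ⟨⟨x, y, l⟩, he₁, rfl⟩ := hmem he₁'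
    obtain ⟨⟨x', y', l'⟩, he₂, rfl⟩ := hmem he₂'
    obtain rfl : l = .plus := hp
    obtain rfl : l' = .minus := hm
    simp only [f, floor_splitEndpoint hfa0 hfa1, floor_splitEndpoint hfb0 hfb1] at hfl1 hfl2 ⊢
    obtain ⟨hx, hy⟩ := hG.minus_le_plus _ he₁ _ he₂ rfl rfl hfl1 hfl2
    exact ⟨splitEndpoint_minus_le_plus ha01 hsepA (hG.mem_parts _ he₁).1 (hG.mem_parts _ he₂).1 hx,
      splitEndpoint_minus_le_plus hb01 hsepB (hG.mem_parts _ he₁).2 (hG.mem_parts _ he₂).2 hy⟩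

theorem CrosswordInvariant.voidedFrom {G G' : BitMG} (hG : CrosswordInvariant G) :
    ∀ {v : ℕ}, VoidedFrom v G G' → CrosswordInvariant G'
  | 0, h => h ▸ hG
  | _ + 1, ⟨_, hH, hV⟩ => (hG.voidedFrom hH).voiding hV

lemma exists_natCast_of_mem_unvoidedCMG_E {n : ℕ} {e : ℚ × ℚ × Label}
    (he : e ∈ (unvoidedCMG n).E) :
    ∃ i j : ℕ, i ≤ n ∧ j ≤ n ∧ e.1 = i ∧ e.2.1 = j ∧ (e.2.2 = Label.zero ↔ i = 0 ∨ j = 0) := by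
  simp only [unvoidedCMG, Finset.product_val, Multiset.pure_def, Multiset.bind_def,
    Multiset.bind_singleton, Multiset.map_map, Function.comp_apply, Multiset.mem_add,
    Multiset.mem_map, Multiset.mem_product, Finset.mem_val, Finset.mem_Icc, Prod.exists, zero_le,
    true_and] at he
  rcases he with (((⟨i, j, ⟨⟨hi, hin⟩, hj, hjn⟩, rfl⟩ | ⟨i, j, ⟨⟨hi, hin⟩, hj, hjn⟩, rfl⟩) |
    ⟨j, hjn, rfl⟩) | ⟨i, ⟨hi, hin⟩, rfl⟩)
  · exact ⟨i, j, hin, hjn, rfl, rfl, by simp; omega⟩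
  · exact ⟨i, j, hin, hjn, rfl, rfl, by simp; omega⟩
  · exact ⟨0, j, Nat.zero_le n, hjn, by simp, rfl, by simp⟩
  · exact ⟨i, 0, hin, Nat.zero_le n, rfl, by simp, by simp⟩

theorem crosswordInvariant_unvoidedCMG (n : ℕ) : CrosswordInvariant (unvoidedCMG n) := by
  have hpart : ∀ i ≤ n, (i : ℚ) ∈ (Finset.Icc 0 n).image (fun i : ℕ => (i : ℚ)) := fun i hi =>
    Finset.mem_image_of_mem _ (Finset.mem_Icc.2 ⟨Nat.zero_le i, hi⟩)
  have hcast : ∀ e ∈ (unvoidedCMG n).E, ((⌊e.1⌋ : ℚ), (⌊e.2.1⌋ : ℚ), e.2.2) = e := fun e he => by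
    obtain ⟨i, j, -, -, hi, hj, -⟩ := exists_natCast_of_mem_unvoidedCMG_E he
    exact Prod.ext (by simp [hi]) (Prod.ext (by simp [hj]) rfl)
  constructor
  · intro e he
    obtain ⟨i, j, hin, hjn, hi, hj, -⟩ := exists_natCast_of_mem_unvoidedCMG_E he
    exact ⟨hi ▸ hpart i hin, hj ▸ hpart j hjn⟩
  · intro e he
    obtain ⟨i, j, -, -, hi, hj, h⟩ := exists_natCast_of_mem_unvoidedCMG_E he
    rw [h, hi, hj, Int.floor_natCast, Int.floor_natCast]
    omega
  · intro e he e' he' h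
    rw [← hcast e he, ← hcast e' he']
    simp only [floorCell, Prod.mk.injEq] at h
    rw [h.1, h.2.1, h.2.2]
  · intro e he e' he' _ _ h1 h2
    rw [← hcast e he, ← hcast e' he', h1, h2]
    exact ⟨le_rfl, le_rfl⟩

theorem blue_above_red_general (n : ℕ) (G : BitMG)
    (hG : ∃ v, VoidedFrom v (unvoidedCMG n) G)
    (k : ℕ)
    (a1 a2 b : ℚ)
    (hf1 : ⌊a1⌋ = (k : ℤ)) (hf2 : ⌊a2⌋ = (k : ℤ))
    (hlt : a1 < a2)
    (l1 l2 : Label)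
    (he1 : (a1, b, l1) ∈ G.E) (he2 : (a2, b, l2) ∈ G.E) :
    l1 = Label.minus ∧ l2 = Label.plus := by
  obtain ⟨v, hv⟩ := hG
  have hI := (crosswordInvariant_unvoidedCMG n).voidedFrom hv
  have hne : l1 ≠ l2 := by
    rintro rfl
    have := hI.eq_of_floorCell_eq _ he1 _ he2 (by simp [floorCell, hf1, hf2])
    simp only [Prod.mk.injEq] at this
    exact hlt.ne this.1
  have hzero : l1 = Label.zero ↔ l2 = Label.zero := by
    rw [hI.label_eq_zero_iff _ he1, hI.label_eq_zero_iff _ he2]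
    simp [hf1, hf2]
  have hnot : ¬ (l1 = Label.plus ∧ l2 = Label.minus) := by
    rintro ⟨rfl, rfl⟩
    have := (hI.minus_le_plus _ he1 _ he2 rfl rfl (by rw [hf1, hf2]) rfl).1
    exact hlt.not_ge this
  cases l1 <;> cases l2 <;> simp_all

/-- Blue above red: in a bit multigraph corresponding to a (2n+1)×(2n+1)
crossword puzzle, if a vertex b > 0 of part B is adjacent to two vertices
a₁ < a₂ (both positive) of the same floor set ⌊k⌋_A, then the edge {a₁,b} is
labeled '−' and the edge {a₂,b} is labeled '+'. -/
theorem blue_above_red (n : ℕ) (G : BitMG)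
    (hG : ∃ v, VoidedFrom v (unvoidedCMG n) G)
    (k : ℕ) (hk : 0 < k)
    (a1 a2 b : ℚ) (ha1 : a1 ∈ G.A) (ha2 : a2 ∈ G.A) (hb : b ∈ G.B)
    (hf1 : ⌊a1⌋ = (k : ℤ)) (hf2 : ⌊a2⌋ = (k : ℤ))
    (hpos1 : 0 < a1) (hlt : a1 < a2) (hbpos : 0 < b)
    (l1 l2 : Label)
    (he1 : (a1, b, l1) ∈ G.E) (he2 : (a2, b, l2) ∈ G.E) :
    l1 = Label.minus ∧ l2 = Label.plus :=
  blue_above_red_general n G hG k a1 a2 b hf1 hf2 hlt l1 l2 he1 he2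
end

section
/- In the crossword multigraph of a crossword puzzle, between two nonzero floor sets there is at most one '+' edge and at most one '−' edge, and a zero floor set is joined to any floor set by at most one '0' edge. -/
/-!
Voiding deletes one edge and splits its two endpoints into vertices with the same integer
parts, so it never changes the floor sets or the label of a surviving edge: the multiset of
triples (floor of the A-end, floor of the B-end, label) can only shrink. In the unvoided
multigraph every vertex is an integer and no edge is repeated, so there each such triple
occurs at most once.
-/

def floorClass (e : ℚ × ℚ × Label) : ℤ × ℤ × Label := (⌊e.1⌋, ⌊e.2.1⌋, e.2.2)

def BitMG.floorProfile (G : BitMG) : Multiset (ℤ × ℤ × Label) := G.E.map floorClass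

theorem BitMG.card_filter_floor_eq_count (G : BitMG) (k m : ℤ) (L : Label) :
    (G.E.filter (fun e => ⌊e.1⌋ = k ∧ ⌊e.2.1⌋ = m ∧ e.2.2 = L)).card =
      G.floorProfile.count (k, m, L) := by
  rw [BitMG.floorProfile, Multiset.count_map]
  congr 1
  refine Multiset.filter_congr fun e _ => ?_
  simp only [floorClass, Prod.ext_iff, eq_comm]

theorem floor_splitTarget {c : ℤ} {v0 v1 : ℚ} (h0 : ⌊v0⌋ = c) (h1 : ⌊v1⌋ = c)
    (L M : Label) (other otherRemoved : ℚ) :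
    ⌊splitTarget L M v0 v1 other otherRemoved⌋ = c := by
  unfold splitTarget
  cases L <;> cases M <;> split_ifs <;> assumption

theorem Voiding.floorProfile_le {G G' : BitMG} (h : Voiding G G') :
    G'.floorProfile ≤ G.floorProfile := by
  obtain ⟨a, b, L, -, -, -, a0, a1, b0, b1, -, -, -, -, -, -,
    ha0, ha1, hb0, hb1, -, -, -, -, hE⟩ := h
  rw [BitMG.floorProfile, hE, Multiset.map_map]
  refine (Multiset.map_congr rfl fun e _ => ?_).trans_le
    (Multiset.map_le_map (Multiset.erase_le (a, b, L) G.E))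
  simp only [Function.comp_apply, floorClass, Prod.mk.injEq, and_true]
  constructor
  · split_ifs with hea
    · exact hea ▸ floor_splitTarget ha0 ha1 _ _ _ _
    · rfl
  · split_ifs with heb
    · exact heb ▸ floor_splitTarget hb0 hb1 _ _ _ _
    · rfl

theorem VoidedFrom.floorProfile_le {U G : BitMG} :
    ∀ {v : ℕ}, VoidedFrom v U G → G.floorProfile ≤ U.floorProfile
  | 0, h => (h : G = U) ▸ le_rfl
  | _ + 1, ⟨_, hv, hvoid⟩ => hvoid.floorProfile_le.trans (VoidedFrom.floorProfile_le hv)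

theorem unvoidedCMG_edge_natCast {n : ℕ} {e : ℚ × ℚ × Label} (he : e ∈ (unvoidedCMG n).E) :
    ∃ i j : ℕ, e.1 = i ∧ e.2.1 = j := by
  -- the casts `(b : ℚ)` in `unvoidedCMG` elaborate as monadic maps over multisets
  simp only [unvoidedCMG, bind_pure_comp, Multiset.fmap_def, Multiset.map_map,
    Multiset.mem_add, Multiset.mem_map, Function.comp_apply] at he
  rcases he with ((⟨p, -, rfl⟩ | ⟨p, -, rfl⟩) | ⟨b, -, rfl⟩) | ⟨a, -, rfl⟩
  exacts [⟨p.1, p.2, rfl, rfl⟩, ⟨p.1, p.2, rfl, rfl⟩, ⟨0, b, by simp, rfl⟩, ⟨a, 0, rfl, by simp⟩]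

theorem unvoidedCMG_edges_nodup (n : ℕ) : (unvoidedCMG n).E.Nodup := by
  simp only [unvoidedCMG, bind_pure_comp, Multiset.fmap_def, Multiset.map_map,
    Multiset.nodup_add, Multiset.disjoint_left, Multiset.mem_add, Multiset.mem_map,
    Finset.mem_val, Finset.mem_Icc, Function.comp_apply]
  refine ⟨⟨⟨?_, ?_, ?_⟩, ?_, ?_⟩, ?_, ?_⟩
  all_goals first
    | exact (Finset.nodup _).map fun p q h => by simpa [Prod.ext_iff] using h
    | grind [Nat.cast_eq_zero]

theorem unvoidedCMG_floorProfile_nodup (n : ℕ) : (unvoidedCMG n).floorProfile.Nodup := by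
  refine (unvoidedCMG_edges_nodup n).map_on fun e he e' he' hee' => ?_
  obtain ⟨i, j, hi, hj⟩ := unvoidedCMG_edge_natCast he
  obtain ⟨i', j', hi', hj'⟩ := unvoidedCMG_edge_natCast he'
  simp only [floorClass, hi, hj, hi', hj', Int.floor_natCast, Prod.mk.injEq, Nat.cast_inj] at hee'
  obtain ⟨rfl, rfl, hL⟩ := hee'
  exact Prod.ext (hi.trans hi'.symm) (Prod.ext (hj.trans hj'.symm) hL)

/-- No doubles: in the crossword multigraph of a crossword puzzle, between two
nonzero floor sets there is at most one '+' edge and at most one '−' edge, and a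
zero floor set is joined to any floor set by at most one '0' edge. -/
theorem no_doubles (n : ℕ) (G : BitMG)
    (hG : ∃ v, VoidedFrom v (unvoidedCMG n) G) :
    (∀ k m : ℤ, k ≠ 0 → m ≠ 0 →
      (G.E.filter (fun e => ⌊e.1⌋ = k ∧ ⌊e.2.1⌋ = m ∧ e.2.2 = Label.plus)).card ≤ 1 ∧
      (G.E.filter (fun e => ⌊e.1⌋ = k ∧ ⌊e.2.1⌋ = m ∧ e.2.2 = Label.minus)).card ≤ 1) ∧
    (∀ k m : ℤ, k = 0 ∨ m = 0 →
      (G.E.filter (fun e => ⌊e.1⌋ = k ∧ ⌊e.2.1⌋ = m ∧ e.2.2 = Label.zero)).card ≤ 1) := by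
  obtain ⟨v, hv⟩ := hG
  have hle : ∀ k m L, (G.E.filter (fun e => ⌊e.1⌋ = k ∧ ⌊e.2.1⌋ = m ∧ e.2.2 = L)).card ≤ 1 :=
    fun k m L => by
      rw [G.card_filter_floor_eq_count]
      exact (Multiset.count_le_of_le _ hv.floorProfile_le).trans
        (Multiset.nodup_iff_count_le_one.mp (unvoidedCMG_floorProfile_nodup n) _)
  exact ⟨fun k m _ _ => ⟨hle k m _, hle k m _⟩, fun k m _ => hle k m _⟩
end
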